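/- arXiv:math/0511211 — 2 statements merged into one kernel-verified Lean document; each statement's English description precedes it below -/
import Mathlib

section
/- Let $K$ be a field of characteristic $p > 0$ with $[K : K^p] = p^d$ finite. Then for any finite field extension $L/K$, one has $[L : L^p] = [K : K^p] = p^d$; in particular, if $[K:K^p] \leq p^{n-1}$ then $[L:L^p] \leq p^{n-1}$ for every finite extension $L$ of $K$. -/
/-!
Write `A` for the image of `K` in `L`, `F` for the Frobenius of `L` and `Lᵖ = F(L)`. The subfield
`F(A)` sits in two towers, `F(A) ≤ A ≤ L` and `F(A) ≤ Lᵖ ≤ L`. Since `F : L ≃ Lᵖ` carries `A` onto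
`F(A)`, we have `[Lᵖ : F(A)] = [L : A]`, and `F(A)` is the image of `Kᵖ` in `A ≅ K`, so
`[A : F(A)] = [K : Kᵖ]`. Comparing `[L : F(A)]` along the two towers and cancelling the finite,
nonzero degree `[L : A] = [L : K]` gives `[L : Lᵖ] = [K : Kᵖ]`.
-/

open Module

theorem relfinrank_algebraMap_fieldRange_top (K L : Type*) [Field K] [Field L]
    [Algebra K L] : (algebraMap K L).fieldRange.relfinrank ⊤ = finrank K L := by
  rw [← IntermediateField.bot_toSubfield, ← IntermediateField.top_toSubfield (F := K),
    ← IntermediateField.finrank_top' (F := K)]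
  exact IntermediateField.relfinrank_bot_left ⊤

section Frobenius

variable {K L : Type*} [Field K] [Field L] (p : ℕ) [ExpChar K p] [ExpChar L p]

theorem Subfield.map_frobenius_le (A : Subfield L) : A.map (frobenius L p) ≤ A := by
  rintro _ ⟨x, hx, rfl⟩
  exact pow_mem hx p

theorem Subfield.relfinrank_map_frobenius (A : Subfield L) (hA : A.relfinrank ⊤ ≠ 0) :
    (A.map (frobenius L p)).relfinrank A = (frobenius L p).fieldRange.relfinrank ⊤ := by
  set F := frobenius L p
  have hAp : A.map F ≤ F.fieldRange := fun _ ⟨x, _, hx⟩ => ⟨x, hx⟩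
  refine Nat.eq_of_mul_eq_mul_right (Nat.pos_of_ne_zero hA) ?_
  calc (A.map F).relfinrank A * A.relfinrank ⊤
      = (A.map F).relfinrank ⊤ := relfinrank_mul_relfinrank (A.map_frobenius_le p) le_top
    _ = (A.map F).relfinrank F.fieldRange * F.fieldRange.relfinrank ⊤ :=
        (relfinrank_mul_relfinrank hAp le_top).symm
    _ = F.fieldRange.relfinrank ⊤ * A.relfinrank ⊤ := by
        rw [F.fieldRange_eq_map, relfinrank_map_map, mul_comm]

theorem RingHom.relfinrank_map_frobenius_fieldRange (f : K →+* L) :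
    (f.fieldRange.map (frobenius L p)).relfinrank f.fieldRange =
      (frobenius K p).fieldRange.relfinrank ⊤ := by
  rw [f.fieldRange_eq_map, Subfield.map_map, ← f.frobenius_comm, ← Subfield.map_map,
    Subfield.relfinrank_map_map, RingHom.fieldRange_eq_map]

theorem finrank_frobenius_fieldRange_eq_of_finiteDimensional [Algebra K L]
    [FiniteDimensional K L] :
    finrank (frobenius L p).fieldRange L = finrank (frobenius K p).fieldRange K := by
  have hKL := relfinrank_algebraMap_fieldRange_top K L
  rw [← Subfield.relfinrank_top_right, ← Subfield.relfinrank_top_right,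
    ← (algebraMap K L).relfinrank_map_frobenius_fieldRange p,
    Subfield.relfinrank_map_frobenius _ _ (hKL ▸ finrank_pos.ne')]

end Frobenius

/-- Let `K` be a field of characteristic `p > 0` with imperfection degree
`[K : Kᵖ] = p ^ d` finite.  Then for any finite extension `L/K` one has
`[L : Lᵖ] = [K : Kᵖ] = p ^ d`; in particular if `[K : Kᵖ] ≤ p ^ (n - 1)` then
`[L : Lᵖ] ≤ p ^ (n - 1)`. -/
theorem imperfection_degree_finite_extension
    (K L : Type*) [Field K] [Field L] [Algebra K L] [FiniteDimensional K L]
    (p : ℕ) [Fact p.Prime] [CharP K p] [CharP L p] (d : ℕ)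
    (h : Module.finrank ↥((frobenius K p).fieldRange) K = p ^ d) :
    Module.finrank ↥((frobenius L p).fieldRange) L = p ^ d ∧
      ∀ n : ℕ, p ^ d ≤ p ^ (n - 1) →
        Module.finrank ↥((frobenius L p).fieldRange) L ≤ p ^ (n - 1) := by
  have hL : finrank (frobenius L p).fieldRange L = p ^ d :=
    (finrank_frobenius_fieldRange_eq_of_finiteDimensional p).trans h
  exact ⟨hL, fun n hn => hL ▸ hn⟩
end

section
/- Let $K$ be a finite field. Then the Milnor $K$-group $K_2^M(K)$ is trivial; equivalently, every Steinberg symbol $\{a, b\}$ with $a, b \in K^\times$ vanishes in $K^\times \otimes K^\times$ modulo the Steinberg relations. -/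
open scoped TensorProduct

variable (F : Type) [Field F]

/-- The Steinberg relations: the subgroup of `Fˣ ⊗ Fˣ` generated by the
elements `a ⊗ b` with `a + b = 1`. -/
noncomputable def steinbergSubgroup :
    AddSubgroup (TensorProduct ℤ (Additive Fˣ) (Additive Fˣ)) :=
  AddSubgroup.closure
    {x | ∃ a b : Fˣ, (a : F) + (b : F) = 1 ∧
      x = (Additive.ofMul a) ⊗ₜ[ℤ] (Additive.ofMul b)}

/-- The second Milnor K-group `K₂ᴹ(F) = (Fˣ ⊗ Fˣ)/⟨a ⊗ b : a + b = 1⟩`. -/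
noncomputable abbrev MilnorK2 : Type :=
  TensorProduct ℤ (Additive Fˣ) (Additive Fˣ) ⧸ steinbergSubgroup F

section Aux

variable {K : Type} [Field K]

/-- Steinberg generators are in the subgroup. -/
lemma steinberg_gen_mem {a b : Kˣ} (h : (a : K) + (b : K) = 1) :
    (Additive.ofMul a) ⊗ₜ[ℤ] (Additive.ofMul b) ∈ steinbergSubgroup K :=
  AddSubgroup.subset_closure ⟨a, b, h, rfl⟩

/-- Pure tensors of powers of `g` are multiples of `g ⊗ g`. -/
lemma tmul_zpow_zpow (g : Kˣ) (m n : ℤ) :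
    (Additive.ofMul (g ^ m)) ⊗ₜ[ℤ] (Additive.ofMul (g ^ n))
      = (m * n) • ((Additive.ofMul g) ⊗ₜ[ℤ] (Additive.ofMul g)) := by
  rw [ofMul_zpow, ofMul_zpow]
  exact TensorProduct.smul_tmul_smul m n _ _

/-- The relation `{a, -a} = 0`. -/
lemma tmul_neg_self_mem {a : Kˣ} (ha : a ≠ 1) :
    (Additive.ofMul a) ⊗ₜ[ℤ] (Additive.ofMul (-a)) ∈ steinbergSubgroup K := by
  have hane : (a : K) ≠ 1 := fun h => ha (Units.ext (by rw [h, Units.val_one]))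
  have ha0 : (a : K) ≠ 0 := a.ne_zero
  have h1 : (1 : K) - (a : K) ≠ 0 := fun h => hane (by linear_combination -h)
  have h2 : (1 : K) - ((a : K))⁻¹ ≠ 0 := by
    rw [sub_ne_zero]
    intro h
    apply hane
    rw [← inv_inv ((a : K)), ← h, inv_one]
  let u : Kˣ := Units.mk0 _ h1
  let v : Kˣ := Units.mk0 _ h2
  have hm1 : (Additive.ofMul a) ⊗ₜ[ℤ] (Additive.ofMul u) ∈ steinbergSubgroup K :=
    steinberg_gen_mem (by
      show (a : K) + (1 - (a : K)) = 1
      ring)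
  have hainv : ((a⁻¹ : Kˣ) : K) = ((a : K))⁻¹ := by simp
  have hm2 : (Additive.ofMul a⁻¹) ⊗ₜ[ℤ] (Additive.ofMul v) ∈ steinbergSubgroup K :=
    steinberg_gen_mem (by
      show ((a⁻¹ : Kˣ) : K) + (1 - ((a : K))⁻¹) = 1
      rw [hainv]; ring)
  have hm2' : (Additive.ofMul a) ⊗ₜ[ℤ] (Additive.ofMul v) ∈ steinbergSubgroup K := by
    have hneg : (Additive.ofMul a) ⊗ₜ[ℤ] (Additive.ofMul v)
        = -((Additive.ofMul a⁻¹) ⊗ₜ[ℤ] (Additive.ofMul v)) := by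
      rw [ofMul_inv, TensorProduct.neg_tmul, neg_neg]
    rw [hneg]
    exact (steinbergSubgroup K).neg_mem hm2
  have huv : u = -a * v := by
    ext
    show (1 : K) - (a : K) = ((-a * v : Kˣ) : K)
    rw [Units.val_mul, Units.val_neg]
    show (1 : K) - (a : K) = -(a : K) * (1 - ((a : K))⁻¹)
    field_simp
    ring
  have huv' : -a = u * v⁻¹ := by rw [huv, mul_inv_cancel_right]
  have hofmul : Additive.ofMul (-a) = Additive.ofMul u - Additive.ofMul v := by
    rw [huv', ofMul_mul, ofMul_inv, sub_eq_add_neg]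
  rw [hofmul, TensorProduct.tmul_sub]
  exact (steinbergSubgroup K).sub_mem hm1 hm2'

end Aux

/-- For a finite field `K`, the Milnor K-group `K₂ᴹ(K)` is trivial: every
Steinberg symbol `{a, b}` vanishes. -/
theorem milnorK2_finite_field_trivial (K : Type) [Field K] [Finite K] :
    Subsingleton (MilnorK2 K) := by
  classical
  cases nonempty_fintype K
  obtain ⟨g, hg⟩ := IsCyclic.exists_generator (α := Kˣ)
  set G : Additive Kˣ := Additive.ofMul g with hG
  set S := steinbergSubgroup K with hS
  -- 2 • (G ⊗ G) ∈ S
  have h2 : (2 : ℤ) • (G ⊗ₜ[ℤ] G) ∈ S := by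
    by_cases hg1 : g = 1
    · have hG0 : G = 0 := by rw [hG, hg1]; rfl
      rw [hG0, TensorProduct.zero_tmul, smul_zero]
      exact S.zero_mem
    · have hsplit : G ⊗ₜ[ℤ] G = G ⊗ₜ[ℤ] (Additive.ofMul (-1 : Kˣ))
          + G ⊗ₜ[ℤ] (Additive.ofMul (-g)) := by
        rw [← TensorProduct.tmul_add]
        congr 1
        rw [← ofMul_mul]
        congr 1
        rw [neg_one_mul, neg_neg]
      have hzero : (2 : ℤ) • (G ⊗ₜ[ℤ] (Additive.ofMul (-1 : Kˣ))) = 0 := by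
        rw [two_smul, ← TensorProduct.tmul_add, ← ofMul_mul]
        have : ((-1 : Kˣ) * (-1 : Kˣ)) = 1 := by simp
        rw [this]
        have h0 : Additive.ofMul (1 : Kˣ) = 0 := rfl
        rw [h0, TensorProduct.tmul_zero]
      have hmem : G ⊗ₜ[ℤ] (Additive.ofMul (-g)) ∈ S := tmul_neg_self_mem hg1
      rw [hsplit, smul_add, hzero, zero_add]
      exact S.zsmul_mem hmem 2
  -- G ⊗ G ∈ S
  have hGG : G ⊗ₜ[ℤ] G ∈ S := by
    by_cases hg1 : g = 1
    · have hG0 : G = 0 := by rw [hG, hg1]; rfl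
      rw [hG0, TensorProduct.zero_tmul]
      exact S.zero_mem
    by_cases hchar : ringChar K = 2
    · -- characteristic 2 : -1 = 1
      haveI : CharP K 2 := ringChar.of_eq hchar
      have h2K : (2 : K) = 0 := by
        have := CharP.cast_eq_zero K 2
        norm_num at this ⊢
        exact_mod_cast this
      have hneg1 : (-1 : Kˣ) = 1 := by
        ext
        rw [Units.val_neg, Units.val_one]
        linear_combination -h2K
      have hsplit : G ⊗ₜ[ℤ] G = G ⊗ₜ[ℤ] (Additive.ofMul (-1 : Kˣ))
          + G ⊗ₜ[ℤ] (Additive.ofMul (-g)) := by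
        rw [← TensorProduct.tmul_add]
        congr 1
        rw [← ofMul_mul]
        congr 1
        rw [neg_one_mul, neg_neg]
      have h0 : G ⊗ₜ[ℤ] (Additive.ofMul (-1 : Kˣ)) = 0 := by
        rw [hneg1]
        have : Additive.ofMul (1 : Kˣ) = 0 := rfl
        rw [this, TensorProduct.tmul_zero]
      rw [hsplit, h0, zero_add]
      exact tmul_neg_self_mem hg1
    · -- odd characteristic : write g = x² + y²
      obtain ⟨x, y, hxy⟩ : ∃ x y : K, x ^ 2 + y ^ 2 = (g : K) := by
        let f : Polynomial K := Polynomial.X ^ 2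
        let p : Polynomial K := Polynomial.X ^ 2 - Polynomial.C (g : K)
        obtain ⟨a, b, hab⟩ : ∃ a b, f.eval a + p.eval b = 0 :=
          FiniteField.exists_root_sum_quadratic (Polynomial.degree_X_pow 2)
            (Polynomial.degree_X_pow_sub_C (by norm_num) _)
            (FiniteField.odd_card_of_char_ne_two hchar)
        refine ⟨a, b, ?_⟩
        simp only [f, p, Polynomial.eval_pow, Polynomial.eval_X, Polynomial.eval_sub,
          Polynomial.eval_C] at hab
        linear_combination hab
      -- g is not a square
      have hordg : orderOf g = Nat.card Kˣ := orderOf_eq_card_of_forall_mem_zpowers hg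
      have hcard : Nat.card Kˣ = Nat.card K - 1 := Nat.card_units K
      have hodd : Nat.card K % 2 = 1 := by
        rw [Nat.card_eq_fintype_card]
        exact FiniteField.odd_card_of_char_ne_two hchar
      have h5 : 2 ≤ Nat.card K := by
        rw [Nat.card_eq_fintype_card]
        exact Fintype.one_lt_card
      have hnotsq : ∀ c : Kˣ, g ≠ c ^ 2 := by
        intro c hc
        have h1 : g ^ (Nat.card Kˣ / 2) = 1 := by
          rw [hc, ← pow_mul]
          have hdvd : 2 * (Nat.card Kˣ / 2) = Nat.card Kˣ := by omega
          rw [hdvd, pow_card_eq_one']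
        have hdvd2 : orderOf g ∣ Nat.card Kˣ / 2 := orderOf_dvd_of_pow_eq_one h1
        rw [hordg] at hdvd2
        have h4 := Nat.le_of_dvd (by omega) hdvd2
        omega
      have hy0 : y ≠ 0 := by
        rintro rfl
        have hx' : x ≠ 0 := by
          rintro rfl
          rw [show (0 : K) ^ 2 + (0 : K) ^ 2 = 0 by ring] at hxy
          exact g.ne_zero hxy.symm
        exact hnotsq (Units.mk0 x hx') (Units.ext (by
          rw [Units.val_pow_eq_pow_val, Units.val_mk0, ← hxy]; ring))
      have hx0 : x ≠ 0 := by
        rintro rfl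
        exact hnotsq (Units.mk0 y hy0) (Units.ext (by
          rw [Units.val_pow_eq_pow_val, Units.val_mk0, ← hxy]; ring))
      set xu : Kˣ := Units.mk0 x hx0 with hxu
      set yu : Kˣ := Units.mk0 y hy0 with hyu
      set a : Kˣ := xu ^ 2 * g⁻¹ with ha
      set b : Kˣ := yu ^ 2 * g⁻¹ with hb
      have hginv : ((g⁻¹ : Kˣ) : K) = ((g : K))⁻¹ := by simp
      have hav : (a : K) = x ^ 2 * ((g : K))⁻¹ := by
        rw [ha, Units.val_mul, hginv, Units.val_pow_eq_pow_val, hxu, Units.val_mk0]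
      have hbv : (b : K) = y ^ 2 * ((g : K))⁻¹ := by
        rw [hb, Units.val_mul, hginv, Units.val_pow_eq_pow_val, hyu, Units.val_mk0]
      have hab : (a : K) + (b : K) = 1 := by
        rw [hav, hbv]
        field_simp
        linear_combination hxy
      have hmem : (Additive.ofMul a) ⊗ₜ[ℤ] (Additive.ofMul b) ∈ S := steinberg_gen_mem hab
      -- express a ⊗ b as an odd multiple of G ⊗ G
      obtain ⟨mx, hmx⟩ := hg xu
      obtain ⟨my, hmy⟩ := hg yu
      have hA : a = g ^ (2 * mx - 1) := by
        have hx2 : xu ^ (2 : ℕ) = g ^ (2 * mx) := by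
          rw [← hmx, ← zpow_natCast (g ^ mx) 2, ← zpow_mul, mul_comm]
          norm_num
        rw [ha, hx2, ← zpow_sub_one]
      have hB : b = g ^ (2 * my - 1) := by
        have hy2 : yu ^ (2 : ℕ) = g ^ (2 * my) := by
          rw [← hmy, ← zpow_natCast (g ^ my) 2, ← zpow_mul, mul_comm]
          norm_num
        rw [hb, hy2, ← zpow_sub_one]
      have hexp : (Additive.ofMul a) ⊗ₜ[ℤ] (Additive.ofMul b)
          = ((2 * mx - 1) * (2 * my - 1)) • (G ⊗ₜ[ℤ] G) := by
        rw [hA, hB, hG]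
        exact tmul_zpow_zpow g _ _
      set c : ℤ := (2 * mx - 1) * (2 * my - 1) with hc
      set k : ℤ := 2 * mx * my - mx - my with hk
      have hck : c = 2 * k + 1 := by rw [hc, hk]; ring
      have hkey : G ⊗ₜ[ℤ] G = c • (G ⊗ₜ[ℤ] G) - k • ((2 : ℤ) • (G ⊗ₜ[ℤ] G)) := by
        rw [smul_smul, ← sub_smul, hck]
        rw [show 2 * k + 1 - k * 2 = (1 : ℤ) by ring, one_smul]
      rw [hkey]
      refine S.sub_mem ?_ (S.zsmul_mem h2 k)
      rw [← hexp]
      exact hmem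
  -- every element of the tensor product is in S
  have htop : ∀ z : TensorProduct ℤ (Additive Kˣ) (Additive Kˣ), z ∈ S := by
    intro z
    induction z using TensorProduct.induction_on with
    | zero => exact S.zero_mem
    | tmul u v =>
      obtain ⟨m, hm⟩ := hg (Additive.toMul u)
      obtain ⟨n, hn⟩ := hg (Additive.toMul v)
      have hu : u = Additive.ofMul (g ^ m) := congrArg Additive.ofMul hm.symm
      have hv : v = Additive.ofMul (g ^ n) := congrArg Additive.ofMul hn.symm
      rw [hu, hv, tmul_zpow_zpow]
      exact S.zsmul_mem hGG _
    | add p q hp hq => exact S.add_mem hp hq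
  constructor
  intro p q
  induction p using QuotientAddGroup.induction_on with | H p =>
  induction q using QuotientAddGroup.induction_on with | H q =>
  apply (QuotientAddGroup.eq).mpr
  exact htop _
end
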